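/- arXiv:1605.02123 — 4 statements merged into one kernel-verified Lean document; each statement's English description precedes it below -/
import Mathlib

section
/- For (a,b,c) ∈ 𝒜³ let α_{abc} = log[P(a|b)P(c|a)/P(c|b)]. If there exists one symbol c₀ ∈ 𝒜 such that the family {α_{a b c₀} : (a,b) ∈ 𝒜²} is commensurable (all pairwise ratios of its nonzero elements are rational), then for every c ∈ 𝒜 the family {α_{a b c} : (a,b) ∈ 𝒜²} is commensurable. -/
/-! All `α_{abc}` with fixed `c` are integer combinations of the `α_{a b c₀}`, because
`α_{abc} = α_{a b c₀} + α_{c a c₀} - α_{c b c₀}` (the `log P(c₀|·)` terms cancel). A family of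
reals is commensurable exactly when it lies on one line `ℚ θ`, and such a line is closed under
integer combinations. -/

open Submodule

def CommensurableFamily {ι : Type*} (f : ι → ℝ) : Prop :=
  ∀ i j, f i ≠ 0 → f j ≠ 0 → ∃ q : ℚ, f i / f j = q

lemma CommensurableFamily.exists_forall_mem_span_singleton {ι : Type*} {f : ι → ℝ}
    (hf : CommensurableFamily f) : ∃ θ : ℝ, ∀ i, f i ∈ ℚ ∙ θ := by
  by_cases hzero : ∀ i, f i = 0
  · exact ⟨0, fun i => by simp [hzero i]⟩
  obtain ⟨i₀, hi₀⟩ := not_forall.1 hzero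
  refine ⟨f i₀, fun i => ?_⟩
  by_cases hi : f i = 0
  · simp [hi]
  obtain ⟨q, hq⟩ := hf i i₀ hi hi₀
  exact mem_span_singleton.2 ⟨q, by rw [Rat.smul_def, ← hq, div_mul_cancel₀ _ hi₀]⟩

lemma commensurableFamily_of_forall_mem_span_singleton {ι : Type*} {f : ι → ℝ} {θ : ℝ}
    (hf : ∀ i, f i ∈ ℚ ∙ θ) : CommensurableFamily f := by
  intro i j _ hj
  obtain ⟨q, hq⟩ := mem_span_singleton.1 (hf i)
  obtain ⟨r, hr⟩ := mem_span_singleton.1 (hf j)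
  rw [← hr, Rat.smul_def] at hj
  rw [← hq, ← hr, Rat.smul_def, Rat.smul_def, mul_div_mul_right _ _ (right_ne_zero_of_mul hj)]
  exact ⟨q / r, by push_cast; rfl⟩

lemma log_mul_div_eq_add_sub {A : Type*} {P : A → A → ℝ} (hP : ∀ a b, 0 < P a b)
    (a b c : A) :
    Real.log (P a b * P c a / P c b) = Real.log (P a b) + Real.log (P c a) - Real.log (P c b) := by
  rw [Real.log_div (mul_pos (hP a b) (hP c a)).ne' (hP c b).ne',
    Real.log_mul (hP a b).ne' (hP c a).ne']

lemma log_mul_div_eq_add_sub_of_base {A : Type*} {P : A → A → ℝ} (hP : ∀ a b, 0 < P a b)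
    (a b c c₀ : A) :
    Real.log (P a b * P c a / P c b) = Real.log (P a b * P c₀ a / P c₀ b)
      + Real.log (P c a * P c₀ c / P c₀ a) - Real.log (P c b * P c₀ c / P c₀ b) := by
  simp only [log_mul_div_eq_add_sub hP]
  ring

theorem commensurable_of_commensurable_for_one_symbol_general
    {A : Type*}
    (P : A → A → ℝ)
    (hPpos : ∀ a b, 0 < P a b)
    (α : A → A → A → ℝ)
    (hα : ∀ a b c, α a b c = Real.log (P a b * P c a / P c b))
    (c₀ : A)
    (hc₀ : ∀ a b a' b', α a b c₀ ≠ 0 → α a' b' c₀ ≠ 0 →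
      ∃ q : ℚ, α a b c₀ / α a' b' c₀ = (q : ℝ)) :
    ∀ c a b a' b', α a b c ≠ 0 → α a' b' c ≠ 0 →
      ∃ q : ℚ, α a b c / α a' b' c = (q : ℝ) := by
  have hbase : CommensurableFamily fun p : A × A => α p.1 p.2 c₀ :=
    fun p p' => hc₀ p.1 p.2 p'.1 p'.2
  obtain ⟨θ, hθ⟩ := hbase.exists_forall_mem_span_singleton
  intro c a b a' b'
  have hc : ∀ p : A × A, α p.1 p.2 c ∈ ℚ ∙ θ := by
    intro ⟨x, y⟩
    have hxy : α x y c = α x y c₀ + α c x c₀ - α c y c₀ := by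
      simp only [hα]
      exact log_mul_div_eq_add_sub_of_base hPpos x y c c₀
    rw [hxy]
    exact sub_mem (add_mem (hθ (x, y)) (hθ (c, x))) (hθ (c, y))
  exact commensurableFamily_of_forall_mem_span_singleton hc (a, b) (a', b')

/-- **Remark.** With `α_{abc} = log (P(a|b)P(c|a)/P(c|b))`: if for some symbol `c₀` the
family `{α_{a b c₀}}` is commensurable (all pairwise ratios of nonzero elements are
rational), then for every `c` the family `{α_{a b c}}` is commensurable. -/
theorem commensurable_of_commensurable_for_one_symbol
    {A : Type*} [Fintype A]
    (hcard : 2 ≤ Fintype.card A)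
    (P : A → A → ℝ)
    (hPpos : ∀ a b, 0 < P a b)
    (hProw : ∀ b, ∑ a, P a b = 1)
    (α : A → A → A → ℝ)
    (hα : ∀ a b c, α a b c = Real.log (P a b * P c a / P c b))
    (c₀ : A)
    (hc₀ : ∀ a b a' b', α a b c₀ ≠ 0 → α a' b' c₀ ≠ 0 →
      ∃ q : ℚ, α a b c₀ / α a' b' c₀ = (q : ℝ)) :
    ∀ c a b a' b', α a b c ≠ 0 → α a' b' c ≠ 0 →
      ∃ q : ℚ, α a b c / α a' b' c = (q : ℝ) :=
  commensurable_of_commensurable_for_one_symbol_general P hPpos α hα c₀ hc₀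
end

section
/- For words w with first letter a and last letter b set F_w(z) = (1/π_a)·[R(I − zR)^{−1}]_{b,a}. Then for every z ∈ ℂ with |z|·ρ(R) < 1 and every k ≥ 1, ∑_{w∈𝒜^{k+1}} P(w) F_w(z) = trace( R(I − zR)^{−1} R^k ); consequently, for every r with ρ(R) < r, there is a constant C = C(z,r) such that |∑_{w∈𝒜^{k+1}} P(w) F_w(z)| ≤ C·r^k for all k ≥ 1. -/
open Matrix

/-- `chainProb P b w` is the probability of emitting the word `w` when the Markov source
with transition probabilities `P a b = P(a|b)` is started from state `b`. -/
def chainProb {A : Type*} (P : A → A → ℝ) : A → List A → ℝ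
  | _, [] => 1
  | b, a :: w => P a b * chainProb P a w

/-- `wordProb π P w` is the stationary probability `P(w)` of the word `w`. -/
def wordProb {A : Type*} (π : A → ℝ) (P : A → A → ℝ) : List A → ℝ
  | [] => 1
  | a :: w => π a * chainProb P a w

/-!
Summing `P(w)` over the inner letters of a word turns the product of transition probabilities
into a matrix power, so the sum equals `trace (Q ^ k * M)` with `M = R (I - zR)⁻¹`. The matrix
`D` is the stationary projection: stochasticity and stationarity give `QD = DQ = D² = D`, hence
`RD = DR = 0` and `Q ^ k = R ^ k + D`, and the `D`-term vanishes since
`trace (R N D) = trace (D R N) = 0`. The bound follows from Gelfand's formula, which gives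
`‖R ^ k‖ ≤ r ^ k` for large `k`.
-/

open Filter Asymptotics

section Words

variable {A : Type*}

lemma tsum_ite_length_eq_sum_ofFn {M : Type*} [AddCommMonoid M] [TopologicalSpace M]
    [Fintype A] (n : ℕ) (g : List A → M) :
    (∑' w : List A, if w.length = n then g w else 0) = ∑ v : Fin n → A, g (List.ofFn v) := by
  classical
  have hsupp : ∀ w ∉ Finset.univ.image (List.ofFn (n := n)),
      (if w.length = n then g w else 0) = 0 := by
    intro w hw
    refine if_neg fun hlen ↦ hw (Finset.mem_image.2 ⟨fun i ↦ w[i], Finset.mem_univ _, ?_⟩)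
    exact List.ext_get (by simp [hlen]) fun i _ _ ↦ by simp
  rw [tsum_eq_sum hsupp, Finset.sum_image fun _ _ _ _ h ↦ List.ofFn_injective h]
  simp

lemma sum_ofFn_succ_eq_sum_cons {M : Type*} [AddCommMonoid M] [Fintype A] (n : ℕ)
    (g : List A → M) :
    ∑ v : Fin (n + 1) → A, g (List.ofFn v) =
      ∑ a, ∑ u : Fin n → A, g (a :: List.ofFn u) := by
  rw [← (Fin.consEquiv fun _ => A).sum_comp, Fintype.sum_prod_type]
  simp [List.ofFn_succ]

lemma List.getLast!_cons_cons [Inhabited A] (a b : A) (l : List A) :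
    (a :: b :: l).getLast! = (b :: l).getLast! :=
  List.getLast!_of_getLast? rfl

variable [Fintype A] [DecidableEq A] [Inhabited A] {P : A → A → ℝ} {Q : Matrix A A ℂ}

lemma sum_chainProb_mul_getLast (hQ : ∀ b a, Q b a = P a b) (n : ℕ) (c : A) (f : A → ℂ) :
    ∑ u : Fin n → A, (chainProb P c (List.ofFn u) : ℂ) * f (c :: List.ofFn u).getLast! =
      ∑ b, (Q ^ n) c b * f b := by
  induction n generalizing c with
  | zero => simp [chainProb, Matrix.one_apply]
  | succ n ih =>
    simp_rw [
      sum_ofFn_succ_eq_sum_cons (g := fun l ↦ (chainProb P c l : ℂ) * f (c :: l).getLast!),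
      List.getLast!_cons_cons, chainProb, Complex.ofReal_mul, mul_assoc, ← Finset.mul_sum, ih,
      pow_succ', Matrix.mul_apply, Finset.sum_mul, Finset.mul_sum, hQ]
    exact Finset.sum_comm.trans (by simp only [mul_assoc])

lemma sum_wordProb_mul_head_getLast (π : A → ℝ) (hQ : ∀ b a, Q b a = P a b) (n : ℕ)
    (g : A → A → ℂ) :
    ∑ v : Fin (n + 1) → A,
        (wordProb π P (List.ofFn v) : ℂ) * g (List.ofFn v).head! (List.ofFn v).getLast! =
      ∑ a, ∑ b, π a * (Q ^ n) a b * g a b := by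
  simp_rw [
    sum_ofFn_succ_eq_sum_cons (g := fun l ↦ (wordProb π P l : ℂ) * g l.head! l.getLast!),
    wordProb, List.head!_cons, Complex.ofReal_mul, mul_assoc, ← Finset.mul_sum,
    sum_chainProb_mul_getLast hQ]

end Words

lemma add_pow_succ_of_mul_eq_zero {S : Type*} [Semiring S] {R D : S} (hRD : R * D = 0)
    (hDR : D * R = 0) (hD : IsIdempotentElem D) (n : ℕ) :
    (R + D) ^ (n + 1) = R ^ (n + 1) + D := by
  induction n with
  | zero => simp
  | succ n ih =>
    have hRnD : R ^ (n + 1) * D = 0 := by rw [pow_succ, mul_assoc, hRD, mul_zero]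
    rw [pow_succ, ih, add_mul, mul_add, mul_add, hRnD, hDR, hD.eq, ← pow_succ, add_zero,
      zero_add]

lemma Matrix.trace_mul_add_pow_succ {A R : Type*} [Fintype A] [DecidableEq A] [CommRing R]
    {M D : Matrix A A R} (hMD : M * D = 0) (hDM : D * M = 0) (hD : IsIdempotentElem D)
    (N : Matrix A A R) (n : ℕ) :
    trace (M * N * (M + D) ^ (n + 1)) = trace (M * N * M ^ (n + 1)) := by
  rw [add_pow_succ_of_mul_eq_zero hMD hDM hD, mul_add, trace_add, trace_mul_cycle M N D, hDM,
    zero_mul, trace_zero, add_zero]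

section StationaryProjection

variable {A : Type*} [Fintype A] {P : A → A → ℝ} {π : A → ℝ} {Q D : Matrix A A ℂ}

lemma stochastic_mul_stationary (hQ : ∀ b a, Q b a = P a b) (hD : ∀ b a, D b a = π a)
    (hProw : ∀ b, ∑ a, P a b = 1) : Q * D = D := by
  ext b a
  simp only [Matrix.mul_apply, hQ, hD, ← Finset.sum_mul, ← Complex.ofReal_sum, hProw,
    Complex.ofReal_one, one_mul]

lemma stationary_mul_stochastic (hQ : ∀ b a, Q b a = P a b) (hD : ∀ b a, D b a = π a)
    (hπstat : ∀ a, ∑ b, π b * P a b = π a) : D * Q = D := by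
  ext b a
  simp only [Matrix.mul_apply, hQ, hD, ← Complex.ofReal_mul, ← Complex.ofReal_sum, hπstat]

lemma stationary_isIdempotentElem (hD : ∀ b a, D b a = π a) (hπsum : ∑ a, π a = 1) :
    IsIdempotentElem D := by
  ext b a
  simp only [Matrix.mul_apply, hD, ← Finset.sum_mul, ← Complex.ofReal_sum, hπsum,
    Complex.ofReal_one, one_mul]

end StationaryProjection

lemma isBigO_pow_of_spectralRadius_lt {B : Type*} [NormedRing B] [NormedAlgebra ℂ B]
    [CompleteSpace B] (a : B) {r : ℝ} (h : spectralRadius ℂ a < ENNReal.ofReal r) :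
    (fun n ↦ a ^ n) =O[atTop] (fun n ↦ r ^ n) := by
  have hr : 0 < r := ENNReal.ofReal_pos.1 (h.trans_le' bot_le)
  have hlt :=
    (spectrum.pow_nnnorm_pow_one_div_tendsto_nhds_spectralRadius a).eventually_lt_const h
  refine IsBigO.of_bound 1 ?_
  filter_upwards [hlt, eventually_gt_atTop 0] with n hn hn0
  rw [one_div, ENNReal.rpow_inv_lt_iff (by positivity), ENNReal.rpow_natCast,
    ← ENNReal.ofReal_pow hr.le, ENNReal.coe_lt_ofReal, coe_nnnorm] at hn
  simpa [abs_of_pos hr] using hn.le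

section MatrixNorm

attribute [local instance] Matrix.linftyOpNormedRing Matrix.linftyOpNormedAlgebra

lemma Matrix.exists_norm_trace_mul_pow_le {A : Type*} [Fintype A] [DecidableEq A]
    (M R : Matrix A A ℂ) {r : ℝ} (h : spectralRadius ℂ R < ENNReal.ofReal r) :
    ∃ C, ∀ k : ℕ, ‖trace (M * R ^ k)‖ ≤ C * r ^ k := by
  have hr : 0 < r := ENNReal.ofReal_pos.1 (h.trans_le' bot_le)
  let traceMulLeft := LinearMap.toContinuousLinearMap
    (traceLinearMap A ℂ ℂ ∘ₗ LinearMap.mulLeft ℂ M)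
  have hO := (traceMulLeft.isBigO_comp _ atTop).trans (isBigO_pow_of_spectralRadius_lt R h)
  obtain ⟨C, hC⟩ := (isBigO_nat_atTop_iff fun k hk ↦ absurd hk (pow_pos hr k).ne').1 hO
  exact ⟨C, fun k ↦ (hC k).trans_eq (by simp [abs_of_pos hr])⟩

end MatrixNorm

theorem sum_wordProb_F_eq_trace_general
    {A : Type*} [Fintype A] [DecidableEq A] [Inhabited A]
    (P : A → A → ℝ) (π : A → ℝ)
    (hProw : ∀ b, ∑ a, P a b = 1)
    (hπpos : ∀ a, 0 < π a)
    (hπsum : ∑ a, π a = 1)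
    (hπstat : ∀ a, ∑ b, π b * P a b = π a)
    (Q D R : Matrix A A ℂ)
    (hQ : ∀ b a, Q b a = (P a b : ℂ))
    (hD : ∀ b a, D b a = (π a : ℂ))
    (hR : R = Q - D)
    (F : A → A → ℂ → ℂ)
    (hF : ∀ a b z, F a b z = (π a : ℂ)⁻¹ * (R * (1 - z • R)⁻¹) b a)
    (z : ℂ) :
    (∀ k : ℕ, 1 ≤ k →
      (∑' w : List A,
        if w.length = k + 1
        then (wordProb π P w : ℂ) * F w.head! w.getLast! z else 0)
        = Matrix.trace (R * (1 - z • R)⁻¹ * R ^ k)) ∧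
    (∀ r : ℝ, spectralRadius ℂ R < ENNReal.ofReal r →
      ∃ C : ℝ, ∀ k : ℕ, 1 ≤ k →
        ‖∑' w : List A,
          if w.length = k + 1
          then (wordProb π P w : ℂ) * F w.head! w.getLast! z else 0‖ ≤ C * r ^ k) := by
  have hDD : IsIdempotentElem D := stationary_isIdempotentElem hD hπsum
  have hRD : R * D = 0 := by
    rw [hR, sub_mul, stochastic_mul_stationary hQ hD hProw, hDD.eq, sub_self]
  have hDR : D * R = 0 := by
    rw [hR, mul_sub, stationary_mul_stochastic hQ hD hπstat, hDD.eq, sub_self]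
  have hQRD : Q = R + D := by rw [hR, sub_add_cancel]
  have key : ∀ k : ℕ, 1 ≤ k →
      (∑' w : List A, if w.length = k + 1
        then (wordProb π P w : ℂ) * F w.head! w.getLast! z else 0)
        = trace (R * (1 - z • R)⁻¹ * R ^ k) := by
    intro k hk
    obtain ⟨n, rfl⟩ := Nat.exists_eq_add_of_le' hk
    rw [tsum_ite_length_eq_sum_ofFn, sum_wordProb_mul_head_getLast π hQ _ (fun a b ↦ F a b z),
      ← trace_mul_add_pow_succ hRD hDR hDD, ← hQRD, trace_mul_comm]
    simp only [trace, diag, mul_apply (M := Q ^ (n + 1)), hF]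
    refine Fintype.sum_congr _ _ fun a ↦ Fintype.sum_congr _ _ fun b ↦ ?_
    have hπa : (π a : ℂ) ≠ 0 := Complex.ofReal_ne_zero.2 (hπpos a).ne'
    field_simp
  refine ⟨key, fun r hr ↦ ?_⟩
  obtain ⟨C, hC⟩ := exists_norm_trace_mul_pow_le (R * (1 - z • R)⁻¹) R hr
  exact ⟨C, fun k hk ↦ key k hk ▸ hC k⟩

/-- **Lemma 4.** With `F_w(z) = F_{a,b}(z) = (1/π_a)[R(I-zR)⁻¹]_{b,a}` for a word `w`
with first letter `a` and last letter `b`: for `|z|·ρ(R) < 1` and `k ≥ 1`,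
`∑_{w∈𝒜^{k+1}} P(w) F_w(z) = trace(R(I-zR)⁻¹ R^k)`, and for every `r > ρ(R)` this sum
is bounded by `C·r^k`. -/
theorem sum_wordProb_F_eq_trace
    {A : Type*} [Fintype A] [DecidableEq A] [Inhabited A]
    (P : A → A → ℝ) (π : A → ℝ)
    (hPpos : ∀ a b, 0 < P a b)
    (hProw : ∀ b, ∑ a, P a b = 1)
    (hπpos : ∀ a, 0 < π a)
    (hπsum : ∑ a, π a = 1)
    (hπstat : ∀ a, ∑ b, π b * P a b = π a)
    (Q D R : Matrix A A ℂ)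
    (hQ : ∀ b a, Q b a = (P a b : ℂ))
    (hD : ∀ b a, D b a = (π a : ℂ))
    (hR : R = Q - D)
    (F : A → A → ℂ → ℂ)
    (hF : ∀ a b z, F a b z = (π a : ℂ)⁻¹ * (R * (1 - z • R)⁻¹) b a)
    (z : ℂ)
    (hz : (‖z‖₊ : ENNReal) * spectralRadius ℂ R < 1) :
    (∀ k : ℕ, 1 ≤ k →
      (∑' w : List A,
        if w.length = k + 1
        then (wordProb π P w : ℂ) * F w.head! w.getLast! z else 0)
        = Matrix.trace (R * (1 - z • R)⁻¹ * R ^ k)) ∧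
    (∀ r : ℝ, spectralRadius ℂ R < ENNReal.ofReal r →
      ∃ C : ℝ, ∀ k : ℕ, 1 ≤ k →
        ‖∑' w : List A,
          if w.length = k + 1
          then (wordProb π P w : ℂ) * F w.head! w.getLast! z else 0‖ ≤ C * r ^ k) :=
  sum_wordProb_F_eq_trace_general P π hProw hπpos hπsum hπstat Q D R hQ hD hR F hF z
end

section
/- Let δ₁ = max_{a,b∈𝒜} P(a|b), so that δ₁ < 1 when all entries of P are positive and |𝒜| ≥ 2. Then for every k ≥ 2, the total probability of words of length k that do overlap themselves over more than k/2 symbols satisfies ∑_{w ∈ 𝒜^k ∖ 𝓑_k} P(w) ≤ δ₁^{⌈k/2⌉}/(1 − δ₁); in particular this sum is O(δ^k) with δ = √δ₁. -/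
open scoped Classical

/-- A word `w` of length `k` lies in `𝒜^k ∖ 𝓑_k` if it overlaps itself over more than
`k/2` symbols: there are `j` with `k/2 < j < k`, `v ∈ 𝒜^j` and `u₁, u₂ ∈ 𝒜^{k-j}` with
`w = u₁ v = v u₂`. -/
def selfOverlapping {A : Type*} (w : List A) : Prop :=
  ∃ v u₁ u₂ : List A, w = u₁ ++ v ∧ w = v ++ u₂ ∧
    w.length < 2 * v.length ∧ v.length < w.length

/-!
A word of length `k` that overlaps itself over `j > k/2` symbols has a border of length `j`:
its prefix of length `j` is also its suffix. Such a word is then determined by its prefix of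
length `k - j`, and the remaining `j` transitions each cost at most `δ₁`. Hence the words with a
border of length `j` carry total probability at most `δ₁ ^ j`, and summing over
`⌈k/2⌉ ≤ j < k` gives a geometric tail.
-/

open Finset

section

variable {A : Type*}

def HasBorder (w : List A) (j : ℕ) : Prop :=
  w.take j = w.drop (w.length - j)

theorem selfOverlapping.exists_hasBorder {w : List A} (h : selfOverlapping w) :
    ∃ j, w.length < 2 * j ∧ j < w.length ∧ HasBorder w j := by
  obtain ⟨v, u₁, u₂, hw₁, hw₂, hlt, hlt'⟩ := h
  have hu₁ : u₁.length = w.length - v.length := by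
    rw [hw₁, List.length_append]; omega
  have hprefix : w.take v.length = v := by rw [hw₂]; exact List.take_left
  have hsuffix : w.drop u₁.length = v := by rw [hw₁]; exact List.drop_left
  exact ⟨v.length, hlt, hlt', by rw [HasBorder, ← hu₁, hprefix, hsuffix]⟩

theorem HasBorder.getElem?_eq {w : List A} {j i : ℕ} (hw : HasBorder w j)
    (hi : w.length - j ≤ i) (hin : i < w.length) :
    w[i]? = w[i - (w.length - j)]? := by
  have hdrop : w[i]? = (w.drop (w.length - j))[i - (w.length - j)]? := by
    rw [List.getElem?_drop]; congr 1; omega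
  rw [hdrop, ← hw, List.getElem?_take, if_pos (by omega)]

theorem HasBorder.eq_of_take_eq {w w' : List A} {j : ℕ} (hw : HasBorder w j)
    (hw' : HasBorder w' j) (hlen : w.length = w'.length) (hj : j < w.length)
    (htake : w.take (w.length - j) = w'.take (w.length - j)) : w = w' := by
  refine List.ext_getElem? fun i => ?_
  induction i using Nat.strong_induction_on with
  | _ i ih =>
    rcases lt_or_ge i (w.length - j) with hi | hi
    · rw [← List.getElem?_take_of_lt hi, htake, List.getElem?_take_of_lt hi]
    · rcases lt_or_ge i w.length with hin | hin
      · rw [hw.getElem?_eq hi hin, hw'.getElem?_eq (hlen ▸ hi) (hlen ▸ hin), ← hlen,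
          ih _ (by omega)]
      · rw [List.getElem?_eq_none hin, List.getElem?_eq_none (hlen ▸ hin)]

variable (A) in
def words [Fintype A] : ℕ → Finset (List A)
  | 0 => {[]}
  | n + 1 => (univ ×ˢ words n).map
      ⟨fun p => p.1 :: p.2, fun _ _ h => Prod.ext (List.cons.inj h).1 (List.cons.inj h).2⟩

section Words

variable [Fintype A]

theorem mem_words {n : ℕ} {w : List A} : w ∈ words A n ↔ w.length = n := by
  induction n generalizing w with
  | zero => simp [words]
  | succ n ih =>
    cases w with
    | nil => simp [words]
    | cons a u =>
      simp only [words, mem_map, mem_product, mem_univ, true_and, ih, List.length_cons,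
        Nat.add_right_cancel_iff]
      exact ⟨fun ⟨_, hu, h⟩ => (List.cons.inj h).2 ▸ hu, fun h => ⟨(a, u), h, rfl⟩⟩

theorem sum_words_succ {M : Type*} [AddCommMonoid M] (f : List A → M) (n : ℕ) :
    ∑ w ∈ words A (n + 1), f w = ∑ a, ∑ u ∈ words A n, f (a :: u) := by
  rw [words, sum_map, sum_product]
  rfl

end Words

section Probability

variable {P : A → A → ℝ} {π : A → ℝ} {δ : ℝ}

theorem chainProb_nonneg (hP : ∀ a b, 0 ≤ P a b) (b : A) (w : List A) :
    0 ≤ chainProb P b w := by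
  induction w generalizing b with
  | nil => exact zero_le_one
  | cons a u ih => exact mul_nonneg (hP a b) (ih a)

theorem wordProb_nonneg (hP : ∀ a b, 0 ≤ P a b) (hπ : ∀ a, 0 ≤ π a) (w : List A) :
    0 ≤ wordProb π P w := by
  cases w with
  | nil => exact zero_le_one
  | cons a u => exact mul_nonneg (hπ a) (chainProb_nonneg hP a u)

theorem chainProb_le_pow (hP : ∀ a b, 0 ≤ P a b) (hδ : ∀ a b, P a b ≤ δ) (b : A)
    (w : List A) : chainProb P b w ≤ δ ^ w.length := by
  induction w generalizing b with
  | nil => exact le_of_eq (pow_zero δ).symm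
  | cons a u ih =>
    rw [chainProb, List.length_cons, pow_succ']
    exact mul_le_mul (hδ a b) (ih a) (chainProb_nonneg hP a u) ((hP a b).trans (hδ a b))

theorem chainProb_append_le (hP : ∀ a b, 0 ≤ P a b) (hδ : ∀ a b, P a b ≤ δ) (b : A)
    (u v : List A) : chainProb P b (u ++ v) ≤ chainProb P b u * δ ^ v.length := by
  induction u generalizing b with
  | nil => simpa [chainProb] using chainProb_le_pow hP hδ b v
  | cons a u ih =>
    rw [List.cons_append, chainProb, chainProb, mul_assoc]
    exact mul_le_mul_of_nonneg_left (ih a) (hP a b)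

theorem wordProb_append_le (hP : ∀ a b, 0 ≤ P a b) (hδ : ∀ a b, P a b ≤ δ)
    (hπ : ∀ a, 0 ≤ π a) {u : List A} (hu : u ≠ []) (v : List A) :
    wordProb π P (u ++ v) ≤ wordProb π P u * δ ^ v.length := by
  obtain ⟨a, u, rfl⟩ := List.exists_cons_of_ne_nil hu
  rw [List.cons_append, wordProb, wordProb, mul_assoc]
  exact mul_le_mul_of_nonneg_left (chainProb_append_le hP hδ a u v) (hπ a)

variable [Fintype A]

theorem sum_chainProb_words (hProw : ∀ b, ∑ a, P a b = 1) (n : ℕ) (b : A) :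
    ∑ w ∈ words A n, chainProb P b w = 1 := by
  induction n generalizing b with
  | zero => simp [words, chainProb]
  | succ n ih => simp only [sum_words_succ, chainProb, ← mul_sum, ih, mul_one, hProw]

theorem sum_wordProb_words (hProw : ∀ b, ∑ a, P a b = 1) (hπsum : ∑ a, π a = 1) (n : ℕ) :
    ∑ w ∈ words A n, wordProb π P w = 1 := by
  cases n with
  | zero => simp [words, wordProb]
  | succ n => simp only [sum_words_succ, wordProb, ← mul_sum, sum_chainProb_words hProw,
      mul_one, hπsum]

theorem sum_wordProb_hasBorder_le (hP : ∀ a b, 0 ≤ P a b) (hδ : ∀ a b, P a b ≤ δ)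
    (hProw : ∀ b, ∑ a, P a b = 1) (hπ : ∀ a, 0 ≤ π a) (hπsum : ∑ a, π a = 1)
    (hδ0 : 0 ≤ δ) {n j : ℕ} (hj : j < n) :
    ∑ w ∈ (words A n).filter (HasBorder · j), wordProb π P w ≤ δ ^ j := by
  set S := (words A n).filter (HasBorder · j)
  have hlen : ∀ w ∈ S, w.length = n := fun w hw => mem_words.1 (mem_filter.1 hw).1
  have hprefix : ∀ w ∈ S, wordProb π P w ≤ δ ^ j * wordProb π P (w.take (n - j)) := by
    intro w hw
    have hne : w.take (n - j) ≠ [] := by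
      rw [← List.length_pos_iff, List.length_take, hlen w hw]; omega
    calc wordProb π P w = wordProb π P (w.take (n - j) ++ w.drop (n - j)) := by
          rw [List.take_append_drop]
      _ ≤ wordProb π P (w.take (n - j)) * δ ^ (w.drop (n - j)).length :=
          wordProb_append_le hP hδ hπ hne _
      _ = δ ^ j * wordProb π P (w.take (n - j)) := by
          rw [List.length_drop, hlen w hw, Nat.sub_sub_self hj.le, mul_comm]
  have hinj : Set.InjOn (List.take (n - j)) (S : Set (List A)) := by
    intro w hw w' hw' h
    exact (mem_filter.1 hw).2.eq_of_take_eq (mem_filter.1 hw').2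
      ((hlen w hw).trans (hlen w' hw').symm) (hlen w hw ▸ hj) (hlen w hw ▸ h)
  have himage : S.image (List.take (n - j)) ⊆ words A (n - j) := by
    intro u hu
    obtain ⟨w, hw, rfl⟩ := mem_image.1 hu
    rw [mem_words, List.length_take, hlen w hw]
    omega
  calc ∑ w ∈ S, wordProb π P w ≤ ∑ w ∈ S, δ ^ j * wordProb π P (w.take (n - j)) :=
        sum_le_sum hprefix
    _ = δ ^ j * ∑ u ∈ S.image (List.take (n - j)), wordProb π P u := by
        rw [sum_image hinj, mul_sum]
    _ ≤ δ ^ j * ∑ u ∈ words A (n - j), wordProb π P u := by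
        refine mul_le_mul_of_nonneg_left ?_ (pow_nonneg hδ0 j)
        exact sum_le_sum_of_subset_of_nonneg himage fun u _ _ => wordProb_nonneg hP hπ u
    _ = δ ^ j := by rw [sum_wordProb_words hProw hπsum, mul_one]

theorem sum_wordProb_selfOverlapping_le (hP : ∀ a b, 0 ≤ P a b) (hδ : ∀ a b, P a b ≤ δ)
    (hProw : ∀ b, ∑ a, P a b = 1) (hπ : ∀ a, 0 ≤ π a) (hπsum : ∑ a, π a = 1)
    (hδ0 : 0 ≤ δ) (hδ1 : δ < 1) (k : ℕ) :
    ∑ w ∈ (words A k).filter selfOverlapping, wordProb π P w ≤ δ ^ ((k + 1) / 2) / (1 - δ) :=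
  calc ∑ w ∈ (words A k).filter selfOverlapping, wordProb π P w
      ≤ ∑ w ∈ words A k, ∑ j ∈ Ico ((k + 1) / 2) k,
          if HasBorder w j then wordProb π P w else 0 := by
        rw [sum_filter]
        refine sum_le_sum fun w hw => ?_
        have hterm_nonneg (j : ℕ) : 0 ≤ if HasBorder w j then wordProb π P w else 0 :=
          ite_nonneg (wordProb_nonneg hP hπ w) le_rfl
        split_ifs with hw_overlap
        · obtain ⟨j, hj, hjk, hborder⟩ := hw_overlap.exists_hasBorder
          rw [mem_words] at hw
          calc wordProb π P w = if HasBorder w j then wordProb π P w else 0 :=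
                (if_pos hborder).symm
            _ ≤ _ := single_le_sum (fun j _ => hterm_nonneg j) (mem_Ico.2 ⟨by omega, by omega⟩)
        · exact sum_nonneg fun j _ => hterm_nonneg j
    _ = ∑ j ∈ Ico ((k + 1) / 2) k, ∑ w ∈ (words A k).filter (HasBorder · j), wordProb π P w := by
        rw [sum_comm]
        simp only [sum_filter]
    _ ≤ ∑ j ∈ Ico ((k + 1) / 2) k, δ ^ j :=
        sum_le_sum fun j hj => sum_wordProb_hasBorder_le hP hδ hProw hπ hπsum hδ0 (mem_Ico.1 hj).2
    _ ≤ δ ^ ((k + 1) / 2) / (1 - δ) := geom_sum_Ico_le_of_lt_one hδ0 hδ1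

end Probability

theorem tsum_ite_length_eq_sum_filter_words [Fintype A] {M : Type*} [AddCommMonoid M]
    [TopologicalSpace M] (Q : List A → Prop) (f : List A → M) (k : ℕ) :
    ∑' w : List A, (if w.length = k ∧ Q w then f w else 0) = ∑ w ∈ (words A k).filter Q, f w :=
  calc ∑' w : List A, (if w.length = k ∧ Q w then f w else 0)
      = ∑ w ∈ words A k, if w.length = k ∧ Q w then f w else 0 :=
        tsum_eq_sum fun w hw => if_neg fun h => hw (mem_words.2 h.1)
    _ = ∑ w ∈ (words A k).filter Q, f w := by
        rw [sum_filter]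
        exact sum_congr rfl fun w hw => by simp only [mem_words.1 hw, true_and]

theorem lt_one_of_sum_eq_one [Fintype A] {f : A → ℝ} (hf : ∀ a, 0 < f a)
    (hsum : ∑ a, f a = 1) (hcard : 2 ≤ Fintype.card A) (a : A) : f a < 1 := by
  obtain ⟨b, hba⟩ := Fintype.exists_ne_of_one_lt_card hcard a
  rw [← hsum]
  exact single_lt_sum hba (mem_univ a) (mem_univ b) (hf b) fun c _ _ => (hf c).le

theorem pow_ceil_half_le_sqrt_pow {x : ℝ} (h0 : 0 ≤ x) (h1 : x ≤ 1) (k : ℕ) :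
    x ^ ((k + 1) / 2) ≤ √x ^ k := by
  calc x ^ ((k + 1) / 2) = √x ^ (2 * ((k + 1) / 2)) := by rw [pow_mul, Real.sq_sqrt h0]
    _ ≤ √x ^ k := pow_le_pow_of_le_one (Real.sqrt_nonneg x) (Real.sqrt_le_one.2 h1) (by omega)

end

theorem sum_wordProb_selfOverlapping_bound_general
    {A : Type*} [Fintype A]
    (hcard : 2 ≤ Fintype.card A)
    (P : A → A → ℝ) (π : A → ℝ)
    (hPpos : ∀ a b, 0 < P a b)
    (hProw : ∀ b, ∑ a, P a b = 1)
    (hπpos : ∀ a, 0 < π a)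
    (hπsum : ∑ a, π a = 1)
    (δ₁ : ℝ) (hδ₁ : IsGreatest {x : ℝ | ∃ a b, P a b = x} δ₁) :
    δ₁ < 1 ∧
    (∀ k : ℕ, 2 ≤ k →
      (∑' w : List A, if w.length = k ∧ selfOverlapping w then wordProb π P w else 0)
        ≤ δ₁ ^ ((k + 1) / 2) / (1 - δ₁)) ∧
    (∃ C : ℝ, ∀ k : ℕ, 2 ≤ k →
      (∑' w : List A, if w.length = k ∧ selfOverlapping w then wordProb π P w else 0)
        ≤ C * Real.sqrt δ₁ ^ k) := by
  have hPle (a b : A) : P a b ≤ δ₁ := hδ₁.2 ⟨a, b, rfl⟩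
  obtain ⟨a, b, hab⟩ := hδ₁.1
  have hδ0 : 0 ≤ δ₁ := hab ▸ (hPpos a b).le
  have hδ1 : δ₁ < 1 := hab ▸ lt_one_of_sum_eq_one (hPpos · b) (hProw b) hcard a
  have hbound (k : ℕ) :
      (∑' w : List A, if w.length = k ∧ selfOverlapping w then wordProb π P w else 0)
        ≤ δ₁ ^ ((k + 1) / 2) / (1 - δ₁) := by
    rw [tsum_ite_length_eq_sum_filter_words]
    exact sum_wordProb_selfOverlapping_le (fun a b => (hPpos a b).le) hPle hProw
      (fun a => (hπpos a).le) hπsum hδ0 hδ1 k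
  refine ⟨hδ1, fun k _ => hbound k, (1 - δ₁)⁻¹, fun k _ => (hbound k).trans ?_⟩
  rw [inv_mul_eq_div]
  exact div_le_div_of_nonneg_right (pow_ceil_half_le_sqrt_pow hδ0 hδ1.le k) (sub_pos.2 hδ1).le

/-- The total probability of words of length `k ≥ 2` overlapping themselves over more
than `k/2` symbols is at most `δ₁^⌈k/2⌉/(1-δ₁)` where `δ₁ = max_{a,b} P(a|b) < 1`;
in particular it is `O(δ^k)` with `δ = √δ₁`. -/
theorem sum_wordProb_selfOverlapping_bound
    {A : Type*} [Fintype A] [DecidableEq A]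
    (hcard : 2 ≤ Fintype.card A)
    (P : A → A → ℝ) (π : A → ℝ)
    (hPpos : ∀ a b, 0 < P a b)
    (hProw : ∀ b, ∑ a, P a b = 1)
    (hπpos : ∀ a, 0 < π a)
    (hπsum : ∑ a, π a = 1)
    (hπstat : ∀ a, ∑ b, π b * P a b = π a)
    (δ₁ : ℝ) (hδ₁ : IsGreatest {x : ℝ | ∃ a b, P a b = x} δ₁) :
    δ₁ < 1 ∧
    (∀ k : ℕ, 2 ≤ k →
      (∑' w : List A, if w.length = k ∧ selfOverlapping w then wordProb π P w else 0)
        ≤ δ₁ ^ ((k + 1) / 2) / (1 - δ₁)) ∧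
    (∃ C : ℝ, ∀ k : ℕ, 2 ≤ k →
      (∑' w : List A, if w.length = k ∧ selfOverlapping w then wordProb π P w else 0)
        ≤ C * Real.sqrt δ₁ ^ k) :=
  sum_wordProb_selfOverlapping_bound_general hcard P π hPpos hProw hπpos hπsum δ₁ hδ₁
end

section
/- For s ∈ ℂ let 𝐏(s) be the matrix with entries [𝐏(s)]_{b,a} = P(a|b)^{−s}. There exist an open neighborhood U of −1 in ℂ and an analytic function λ : U → ℂ such that λ(−1) = 1, for every s ∈ U the number λ(s) is an eigenvalue of 𝐏(s) (i.e., det(λ(s)·I − 𝐏(s)) = 0), and λ′(−1) = h, where h = −∑_{a,b∈𝒜} π_a P(b|a) log P(b|a) is the entropy rate of the source. -/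
/-!
The eigenvalue `λ(s)` and an eigenvector `v(s)` normalized by `π ⬝ v(s) = 1` are produced by the
implicit function theorem, applied to `(s, λ, v) ↦ (π ⬝ v - 1, 𝐏(s) v - λ v)` at `(-1, 1, 𝟙)`.
Its partial derivative in `(λ, v)` is injective because `π` is a left eigenvector with
`π ⬝ 𝟙 = 1` and, by the maximum principle for the positive stochastic matrix `𝐏(-1)`, the
eigenvalue `1` has only the constant eigenvectors. Differentiating `λ(s) = π ⬝ 𝐏(s) v(s)` and
using `π 𝐏(-1) = π` and `π ⬝ v'(-1) = 0` gives `λ'(-1) = π ⬝ 𝐏'(-1) 𝟙 = h`.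
-/

open Matrix Filter Topology
open scoped ContDiff

theorem ContinuousLinearMap.isInvertible_of_injective {𝕜 V : Type*} [NontriviallyNormedField 𝕜]
    [CompleteSpace 𝕜] [NormedAddCommGroup V] [NormedSpace 𝕜 V] [FiniteDimensional 𝕜 V]
    {f : V →L[𝕜] V} (hf : Function.Injective f) : f.IsInvertible :=
  ⟨(LinearEquiv.ofInjectiveEndo f.toLinearMap hf).toContinuousLinearEquiv, rfl⟩

theorem Matrix.det_smul_one_sub_eq_zero_of_mulVec_eq_smul {n K : Type*} [Fintype n]
    [DecidableEq n] [Field K] {A : Matrix n n K} {v : n → K} {c : K} (hv : v ≠ 0)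
    (h : A *ᵥ v = c • v) : det (c • (1 : Matrix n n K) - A) = 0 :=
  exists_mulVec_eq_zero_iff.1 ⟨v, hv, by rw [sub_mulVec, smul_mulVec, one_mulVec, h, sub_self]⟩

section Derivatives

variable {𝕜 n : Type*} [NontriviallyNormedField 𝕜] [Fintype n]

theorem HasDerivAt.mulVec {m : Type*} {M : 𝕜 → Matrix m n 𝕜} {M' : Matrix m n 𝕜}
    {v : 𝕜 → n → 𝕜} {v' : n → 𝕜} {s : 𝕜}
    (hM : ∀ i j, HasDerivAt (fun s => M s i j) (M' i j) s) (hv : HasDerivAt v v' s) :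
    HasDerivAt (fun s => M s *ᵥ v s) (M' *ᵥ v s + M s *ᵥ v') s := by
  refine hasDerivAt_pi.2 fun i => ?_
  show HasDerivAt (fun s => ∑ j, M s i j * v s j)
    (∑ j, M' i j * v s j + ∑ j, M s i j * v' j) s
  rw [← Finset.sum_add_distrib]
  exact HasDerivAt.fun_sum fun j _ => ((hM i j).mul (hasDerivAt_pi.1 hv j)).congr_deriv (by ring)

theorem HasDerivAt.const_dotProduct (w : n → 𝕜) {v : 𝕜 → n → 𝕜} {v' : n → 𝕜} {s : 𝕜}
    (hv : HasDerivAt v v' s) : HasDerivAt (fun s => w ⬝ᵥ v s) (w ⬝ᵥ v') s :=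
  HasDerivAt.fun_sum fun j _ => (hasDerivAt_pi.1 hv j).const_mul (w j)

theorem hasDerivAt_of_eventually_mulVec_eq_smul {M : 𝕜 → Matrix n n 𝕜} {M' : Matrix n n 𝕜}
    {lam : 𝕜 → 𝕜} {v : 𝕜 → n → 𝕜} {v' w : n → 𝕜} {s₀ : 𝕜}
    (hM : ∀ i j, HasDerivAt (fun s => M s i j) (M' i j) s₀) (hv : HasDerivAt v v' s₀)
    (heig : ∀ᶠ s in 𝓝 s₀, M s *ᵥ v s = lam s • v s ∧ w ⬝ᵥ v s = 1)
    (hw : w ᵥ* M s₀ = lam s₀ • w) :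
    HasDerivAt lam (w ⬝ᵥ (M' *ᵥ v s₀)) s₀ := by
  have hlam : lam =ᶠ[𝓝 s₀] fun s => w ⬝ᵥ (M s *ᵥ v s) := heig.mono fun s hs => by
    simp only [hs.1, dotProduct_smul, hs.2, smul_eq_mul, mul_one]
  have hwv' : w ⬝ᵥ v' = 0 :=
    ((hv.const_dotProduct w).congr_of_eventuallyEq (heig.mono fun s hs => hs.2.symm)).unique
      (hasDerivAt_const s₀ 1)
  refine (((HasDerivAt.mulVec hM hv).const_dotProduct w).congr_of_eventuallyEq hlam).congr_deriv ?_
  rw [dotProduct_add, dotProduct_mulVec w (M s₀), hw, smul_dotProduct, hwv', smul_zero, add_zero]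

end Derivatives

section SimpleEigenvalue

variable {𝕜 n : Type*} [RCLike 𝕜] [Fintype n]

def eigenEquation (M : 𝕜 → Matrix n n 𝕜) (w : n → 𝕜) (x : 𝕜 × 𝕜 × (n → 𝕜)) : 𝕜 × (n → 𝕜) :=
  (w ⬝ᵥ x.2.2 - 1, M x.1 *ᵥ x.2.2 - x.2.1 • x.2.2)

theorem analyticAt_eigenEquation {M : 𝕜 → Matrix n n 𝕜} (w : n → 𝕜) {x : 𝕜 × 𝕜 × (n → 𝕜)}
    (hM : ∀ i j, AnalyticAt 𝕜 (fun s => M s i j) x.1) : AnalyticAt 𝕜 (eigenEquation M w) x := by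
  have hv : ∀ j, AnalyticAt 𝕜 (fun x : 𝕜 × 𝕜 × (n → 𝕜) => x.2.2 j) x := fun j =>
    ((ContinuousLinearMap.proj j).comp
      ((ContinuousLinearMap.snd 𝕜 𝕜 (n → 𝕜)).comp (ContinuousLinearMap.snd 𝕜 𝕜 _))).analyticAt x
  refine .prod ((Finset.analyticAt_fun_sum _ fun j _ => analyticAt_const.mul (hv j)).sub
    analyticAt_const) (.pi fun i => .sub ?_ ((analyticAt_fst.comp analyticAt_snd).mul (hv i)))
  exact Finset.analyticAt_fun_sum _ fun j _ => ((hM i j).comp analyticAt_fst).mul (hv j)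

theorem fderiv_eigenEquation_comp_inr_apply {M : 𝕜 → Matrix n n 𝕜} (w : n → 𝕜)
    {x : 𝕜 × 𝕜 × (n → 𝕜)} (hM : ∀ i j, AnalyticAt 𝕜 (fun s => M s i j) x.1)
    (y : 𝕜 × (n → 𝕜)) :
    (fderiv 𝕜 (eigenEquation M w) x ∘L .inr 𝕜 𝕜 _) y =
      (w ⬝ᵥ y.2, M x.1 *ᵥ y.2 - x.2.1 • y.2 - y.1 • x.2.2) := by
  obtain ⟨s, y₀⟩ := x
  have hsmul : HasFDerivAt (fun y : 𝕜 × (n → 𝕜) => y.1 • y.2)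
      (y₀.1 • .snd 𝕜 𝕜 _ + (ContinuousLinearMap.fst 𝕜 𝕜 (n → 𝕜)).smulRight y₀.2) y₀ :=
    HasFDerivAt.smul (c := Prod.fst) (f := Prod.snd) hasFDerivAt_fst hasFDerivAt_snd
  have hpartial : HasFDerivAt (fun y => eigenEquation M w (s, y))
      (((LinearMap.toContinuousLinearMap (dotProductBilin 𝕜 𝕜 w)).comp (.snd 𝕜 𝕜 _)).prod
        ((LinearMap.toContinuousLinearMap (M s).mulVecLin).comp (.snd 𝕜 𝕜 _) -
          (y₀.1 • .snd 𝕜 𝕜 _ + (ContinuousLinearMap.fst 𝕜 𝕜 (n → 𝕜)).smulRight y₀.2))) y₀ :=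
    .prodMk (((LinearMap.toContinuousLinearMap (dotProductBilin 𝕜 𝕜 w)).comp
        (.snd 𝕜 𝕜 _)).hasFDerivAt.sub_const 1)
      ((((LinearMap.toContinuousLinearMap (M s).mulVecLin).comp
        (.snd 𝕜 𝕜 _)).hasFDerivAt).sub hsmul)
  have hcomp := (analyticAt_eigenEquation w hM).differentiableAt.hasFDerivAt.comp y₀
    (hasFDerivAt_prodMk_right (𝕜 := 𝕜) s y₀)
  rw [hcomp.unique hpartial]
  simp [sub_sub]

theorem injective_fderiv_eigenEquation_comp_inr {M : 𝕜 → Matrix n n 𝕜} {w v₀ : n → 𝕜}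
    {s₀ lam₀ : 𝕜} (hM : ∀ i j, AnalyticAt 𝕜 (fun s => M s i j) s₀)
    (hw : w ᵥ* M s₀ = lam₀ • w) (hwv : w ⬝ᵥ v₀ = 1)
    (hsimple : ∀ u, M s₀ *ᵥ u = lam₀ • u → ∃ c : 𝕜, u = c • v₀) :
    Function.Injective (fderiv 𝕜 (eigenEquation M w) (s₀, lam₀, v₀) ∘L .inr 𝕜 𝕜 _) := by
  rw [injective_iff_map_eq_zero]
  rintro ⟨μ, z⟩ h
  rw [fderiv_eigenEquation_comp_inr_apply w hM, Prod.mk_eq_zero] at h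
  obtain ⟨hwz, hz⟩ : w ⬝ᵥ z = 0 ∧ M s₀ *ᵥ z - lam₀ • z - μ • v₀ = 0 := h
  obtain rfl : μ = 0 := by
    simpa [dotProduct_mulVec, hw, hwz, hwv] using congrArg (w ⬝ᵥ ·) hz
  obtain ⟨c, rfl⟩ := hsimple z (by simpa [sub_eq_zero] using hz)
  rw [dotProduct_smul, hwv, smul_eq_mul, mul_one] at hwz
  simp [hwz]

theorem exists_analyticAt_eigenvalue_branch {M : 𝕜 → Matrix n n 𝕜} {w v₀ : n → 𝕜} {s₀ lam₀ : 𝕜}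
    (hM : ∀ i j, AnalyticAt 𝕜 (fun s => M s i j) s₀) (hv₀ : M s₀ *ᵥ v₀ = lam₀ • v₀)
    (hw : w ᵥ* M s₀ = lam₀ • w) (hwv : w ⬝ᵥ v₀ = 1)
    (hsimple : ∀ u, M s₀ *ᵥ u = lam₀ • u → ∃ c : 𝕜, u = c • v₀) :
    ∃ (lam : 𝕜 → 𝕜) (v : 𝕜 → n → 𝕜), AnalyticAt 𝕜 lam s₀ ∧ lam s₀ = lam₀ ∧
      (∀ᶠ s in 𝓝 s₀, M s *ᵥ v s = lam s • v s ∧ w ⬝ᵥ v s = 1) ∧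
      HasDerivAt lam (w ⬝ᵥ (Matrix.of (fun i j => deriv (fun s => M s i j) s₀) *ᵥ v₀)) s₀ := by
  have hf : ContDiffAt 𝕜 ω (eigenEquation M w) (s₀, lam₀, v₀) :=
    (analyticAt_eigenEquation w hM).contDiffAt
  have hinv := ContinuousLinearMap.isInvertible_of_injective
    (injective_fderiv_eigenEquation_comp_inr hM hw hwv hsimple)
  set ψ := hf.implicitFunction (by simp) hinv
  have hψ : AnalyticAt 𝕜 ψ s₀ := (hf.contDiffAt_implicitFunction _ hinv).analyticAt
  have hψ₀ : ψ s₀ = (lam₀, v₀) := hf.implicitFunction_apply_self _ hinv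
  have heig : ∀ᶠ s in 𝓝 s₀, M s *ᵥ (ψ s).2 = (ψ s).1 • (ψ s).2 ∧ w ⬝ᵥ (ψ s).2 = 1 := by
    filter_upwards [hf.eventually_apply_implicitFunction _ hinv] with s hs
    simp only [eigenEquation, hwv, hv₀, sub_self, Prod.mk.injEq, sub_eq_zero] at hs
    exact hs.symm
  refine ⟨fun s => (ψ s).1, fun s => (ψ s).2, analyticAt_fst.comp hψ, congrArg Prod.fst hψ₀,
    heig, ?_⟩
  have hv : HasDerivAt (fun s => (ψ s).2) (deriv (fun s => (ψ s).2) s₀) s₀ :=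
    (analyticAt_snd.comp hψ).differentiableAt.hasDerivAt
  have hM' : ∀ i j, HasDerivAt (fun s => M s i j)
      (Matrix.of (fun i j => deriv (fun s => M s i j) s₀) i j) s₀ :=
    fun i j => (hM i j).differentiableAt.hasDerivAt
  simpa only [hψ₀] using hasDerivAt_of_eventually_mulVec_eq_smul hM' hv heig (by rw [hψ₀]; exact hw)

end SimpleEigenvalue

section Stochastic

variable {A : Type*} [Fintype A] {P : A → A → ℝ}

theorem apply_eq_apply_of_forall_sum_mul_eq (hPpos : ∀ a b, 0 < P a b)
    (hProw : ∀ b, ∑ a, P a b = 1) {u : A → ℝ} (hu : ∀ b, ∑ a, P a b * u a = u b) (a b : A) :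
    u a = u b := by
  obtain ⟨c, -, hc⟩ := Finset.exists_max_image Finset.univ u ⟨a, Finset.mem_univ a⟩
  suffices h : ∀ d, u d = u c by rw [h a, h b]
  have hzero : ∑ d, P d c * (u c - u d) = 0 := by
    simp only [mul_sub, Finset.sum_sub_distrib, ← Finset.sum_mul, hProw, one_mul, hu, sub_self]
  intro d
  have hterm := (Finset.sum_eq_zero_iff_of_nonneg fun d _ =>
    mul_nonneg (hPpos d c).le (sub_nonneg.2 (hc d (Finset.mem_univ d)))).1 hzero d
    (Finset.mem_univ d)
  linarith [(mul_eq_zero.1 hterm).resolve_left (hPpos d c).ne']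

theorem exists_eq_smul_const_of_mulVec_eq_self (hPpos : ∀ a b, 0 < P a b)
    (hProw : ∀ b, ∑ a, P a b = 1) {u : A → ℂ}
    (hu : (Matrix.of fun b a => (P a b : ℂ)) *ᵥ u = u) : ∃ c : ℂ, u = c • fun _ => 1 := by
  have hu' : ∀ b, ∑ a, (P a b : ℂ) * u a = u b := fun b => congrFun hu b
  have hconst : ∀ a b, u a = u b := by
    intro a b
    apply Complex.ext
    · refine apply_eq_apply_of_forall_sum_mul_eq hPpos hProw (u := fun a => (u a).re)
        (fun b => ?_) a b
      simpa using congrArg Complex.re (hu' b)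
    · refine apply_eq_apply_of_forall_sum_mul_eq hPpos hProw (u := fun a => (u a).im)
        (fun b => ?_) a b
      simpa using congrArg Complex.im (hu' b)
  cases isEmpty_or_nonempty A with
  | inl _ => exact ⟨0, Subsingleton.elim _ _⟩
  | inr h => obtain ⟨a⟩ := h; exact ⟨u a, funext fun b => by simp [hconst a b]⟩

end Stochastic

theorem hasDerivAt_cexp_neg_mul_log (r : ℝ) (s : ℂ) :
    HasDerivAt (fun s : ℂ => Complex.exp (-s * Real.log r))
      (-Real.log r * Complex.exp (-s * Real.log r)) s := by
  simpa [mul_comm] using ((hasDerivAt_id s).neg.mul_const (Real.log r : ℂ)).cexp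

theorem cexp_neg_neg_one_mul_log {r : ℝ} (hr : 0 < r) :
    Complex.exp (-(-1) * Real.log r) = r := by
  rw [neg_neg, one_mul, ← Complex.ofReal_exp, Real.exp_log hr]

theorem perron_eigenvalue_analytic_branch_general
    {A : Type*} [Fintype A] [DecidableEq A]
    (P : A → A → ℝ) (π : A → ℝ)
    (hPpos : ∀ a b, 0 < P a b)
    (hProw : ∀ b, ∑ a, P a b = 1)
    (hπsum : ∑ a, π a = 1)
    (hπstat : ∀ a, ∑ b, π b * P a b = π a)
    -- the matrix `𝐏(s)` with entries `P(a|b)^{-s} = exp(-s log P(a|b))`: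
    (Ps : ℂ → Matrix A A ℂ)
    (hPs : ∀ s : ℂ, ∀ b a, Ps s b a = Complex.exp (-s * Real.log (P a b)))
    (h : ℝ)
    (hh : h = -∑ a, ∑ b, π a * P b a * Real.log (P b a)) :
    ∃ (U : Set ℂ) (lam : ℂ → ℂ), IsOpen U ∧ (-1 : ℂ) ∈ U ∧
      (∀ s ∈ U, AnalyticAt ℂ lam s) ∧
      lam (-1) = 1 ∧
      (∀ s ∈ U, Matrix.det (lam s • (1 : Matrix A A ℂ) - Ps s) = 0) ∧
      deriv lam (-1) = (h : ℂ) := by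
  have hentry : ∀ b a, (fun s => Ps s b a) = fun s => Complex.exp (-s * Real.log (P a b)) :=
    fun b a => funext fun s => hPs s b a
  have hPs₁ : Ps (-1) = Matrix.of fun b a => (P a b : ℂ) := by
    ext b a
    rw [hPs, cexp_neg_neg_one_mul_log (hPpos a b), of_apply]
  have hderiv : Matrix.of (fun b a => deriv (fun s => Ps s b a) (-1)) =
      Matrix.of fun b a => -(Real.log (P a b) * P a b : ℂ) := by
    ext b a
    rw [of_apply, hentry, (hasDerivAt_cexp_neg_mul_log _ _).deriv,
      cexp_neg_neg_one_mul_log (hPpos a b), of_apply, neg_mul]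
  obtain ⟨lam, v, hlam, hlam₁, heig, hlam'⟩ :=
    exists_analyticAt_eigenvalue_branch (M := Ps) (w := fun a => (π a : ℂ))
      (v₀ := fun _ => 1) (s₀ := -1) (lam₀ := 1)
      (fun b a => by rw [hentry]; fun_prop)
      (by ext b; simp [hPs₁, mulVec, dotProduct, ← Complex.ofReal_sum, hProw])
      (by
        ext a
        simp [hPs₁, vecMul, dotProduct, ← Complex.ofReal_mul, ← Complex.ofReal_sum, hπstat])
      (by simp [dotProduct, ← Complex.ofReal_sum, hπsum])
      (fun u hu =>
        exists_eq_smul_const_of_mulVec_eq_self hPpos hProw (by rwa [one_smul, hPs₁] at hu))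
  obtain ⟨U, hU, hUopen, hmem⟩ := eventually_nhds_iff.1 (heig.and hlam.eventually_analyticAt)
  refine ⟨U, lam, hUopen, hmem, fun s hs => (hU s hs).2, hlam₁, fun s hs => ?_, ?_⟩
  · obtain ⟨⟨hv, hwv⟩, -⟩ := hU s hs
    exact det_smul_one_sub_eq_zero_of_mulVec_eq_smul (fun h0 => by simp [h0] at hwv) hv
  · rw [hlam'.deriv, hderiv, hh]
    simp only [dotProduct, mulVec, of_apply, mul_one, Finset.mul_sum, mul_neg,
      ← Finset.sum_neg_distrib, Complex.ofReal_sum, Complex.ofReal_neg, Complex.ofReal_mul]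
    exact Finset.sum_congr rfl fun b _ => Finset.sum_congr rfl fun a _ => by ring

/-- There is an analytic branch `λ(s)` of eigenvalues of the matrix
`𝐏(s) = (P(a|b)^{-s})_{b,a}` near `s = -1` with `λ(-1) = 1` and `λ'(-1) = h`,
the entropy rate of the source. -/
theorem perron_eigenvalue_analytic_branch
    {A : Type*} [Fintype A] [DecidableEq A]
    (hcard : 2 ≤ Fintype.card A)
    (P : A → A → ℝ) (π : A → ℝ)
    (hPpos : ∀ a b, 0 < P a b)
    (hProw : ∀ b, ∑ a, P a b = 1)
    (hπpos : ∀ a, 0 < π a)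
    (hπsum : ∑ a, π a = 1)
    (hπstat : ∀ a, ∑ b, π b * P a b = π a)
    -- the matrix `𝐏(s)` with entries `P(a|b)^{-s} = exp(-s log P(a|b))`:
    (Ps : ℂ → Matrix A A ℂ)
    (hPs : ∀ s : ℂ, ∀ b a, Ps s b a = Complex.exp (-s * Real.log (P a b)))
    (h : ℝ)
    (hh : h = -∑ a, ∑ b, π a * P b a * Real.log (P b a)) :
    ∃ (U : Set ℂ) (lam : ℂ → ℂ), IsOpen U ∧ (-1 : ℂ) ∈ U ∧
      (∀ s ∈ U, AnalyticAt ℂ lam s) ∧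
      lam (-1) = 1 ∧
      (∀ s ∈ U, Matrix.det (lam s • (1 : Matrix A A ℂ) - Ps s) = 0) ∧
      deriv lam (-1) = (h : ℂ) :=
  perron_eigenvalue_analytic_branch_general P π hPpos hProw hπsum hπstat Ps hPs h hh
end
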